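/- The Laplace mechanism satisfies (ε, 0)-differential privacy: for a query f : databases → ℝ^k with ℓ₁-sensitivity Δf, the mechanism M(D) = f(D) + (Y₁, …, Y_k) with Y_i i.i.d. Laplace(Δf/ε) is ε-differentially private. -/

import Mathlib

/-!
The noise vector has density `x ↦ ∏ i, p (x i)` with `p y = exp (-|y| / b) / (2b)`, so the output
of the mechanism on `D` has the translated density `x ↦ ∏ i, p (x i - f D i)`. The triangle
inequality gives `p y ≤ exp (|y - y'| / b) * p y'`, hence the output densities on neighbouring
databases differ pointwise by a factor at most `exp (∑ i, |f D i - f D' i| / b) ≤ exp ε` for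
`b = Δf / ε`, and integrating over `S` gives the claim.
-/

open MeasureTheory

/-- The Laplace distribution on `ℝ` with scale `b`, given by density
`(1/(2b)) exp(-|y|/b)` with respect to Lebesgue measure. -/
noncomputable def laplaceMeasure (b : ℝ) : Measure ℝ :=
  volume.withDensity fun y => ENNReal.ofReal ((1 / (2 * b)) * Real.exp (-|y| / b))

open Real
open scoped ENNReal

namespace MeasureTheory

variable {E : Type*} [MeasurableSpace E]

theorem lintegral_fin_nat_prod_eq_prod {n : ℕ} {μ : Fin n → Measure E} [∀ i, SigmaFinite (μ i)]
    {f : Fin n → E → ℝ≥0∞} (hf : ∀ i, Measurable (f i)) :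
    ∫⁻ x : Fin n → E, ∏ i, f i (x i) ∂(Measure.pi μ) = ∏ i, ∫⁻ x, f i x ∂(μ i) := by
  induction n with
  | zero => simp
  | succ n ih =>
      calc
        _ = ∫⁻ x : E × (Fin n → E), f 0 x.1 * ∏ i : Fin n, f i.succ (x.2 i)
            ∂((μ 0).prod (Measure.pi fun i ↦ μ i.succ)) := by
          rw [← ((measurePreserving_piFinSuccAbove μ 0).symm).lintegral_comp_emb
            (MeasurableEquiv.measurableEmbedding _)]
          simp_rw [MeasurableEquiv.piFinSuccAbove_symm_apply, Fin.insertNthEquiv,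
            Fin.prod_univ_succ, Fin.insertNth_zero]
          simp only [Fin.zero_succAbove, cast_eq, Equiv.coe_fn_mk, Fin.cons_zero, Fin.cons_succ]
        _ = (∫⁻ x, f 0 x ∂μ 0) * ∏ i : Fin n, ∫⁻ x, f i.succ x ∂(μ i.succ) := by
          rw [lintegral_prod_mul (g := fun y : Fin n → E ↦ ∏ i, f i.succ (y i))
            (hf 0).aemeasurable
            (Finset.measurable_prod _ fun i _ ↦ (hf i.succ).comp (measurable_pi_apply i)).aemeasurable,
            ih fun i ↦ hf i.succ]
        _ = ∏ i, ∫⁻ x, f i x ∂(μ i) := by rw [Fin.prod_univ_succ]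

theorem lintegral_fintype_prod_eq_prod {ι : Type*} [Fintype ι] {μ : ι → Measure E}
    [∀ i, SigmaFinite (μ i)] {f : ι → E → ℝ≥0∞} (hf : ∀ i, Measurable (f i)) :
    ∫⁻ x : ι → E, ∏ i, f i (x i) ∂(Measure.pi μ) = ∏ i, ∫⁻ x, f i x ∂(μ i) := by
  let e := (Fintype.equivFin ι).symm
  rw [← (measurePreserving_piCongrLeft _ e).lintegral_comp_emb
    (MeasurableEquiv.measurableEmbedding _)]
  simp_rw [← e.prod_comp, MeasurableEquiv.coe_piCongrLeft, Equiv.piCongrLeft_apply_apply]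
  exact lintegral_fin_nat_prod_eq_prod fun i ↦ hf (e i)

theorem Measure.pi_withDensity {ι : Type*} [Fintype ι] {μ : ι → Measure E}
    [∀ i, SigmaFinite (μ i)] {f : ι → E → ℝ≥0∞} [∀ i, SigmaFinite ((μ i).withDensity (f i))]
    (hf : ∀ i, Measurable (f i)) :
    Measure.pi (fun i ↦ (μ i).withDensity (f i)) =
      (Measure.pi μ).withDensity fun x ↦ ∏ i, f i (x i) := by
  refine Measure.pi_eq (μ := fun i ↦ (μ i).withDensity (f i)) fun s hs ↦ ?_
  rw [withDensity_apply _ (.univ_pi hs), Measure.restrict_pi_pi,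
    lintegral_fintype_prod_eq_prod hf]
  simp_rw [withDensity_apply _ (hs _)]

theorem map_add_left_withDensity {G : Type*} [MeasurableSpace G] [AddGroup G] [MeasurableAdd G]
    (μ : Measure G) [μ.IsAddLeftInvariant] (f : G → ℝ≥0∞) (a : G) :
    (μ.withDensity f).map (a + ·) = μ.withDensity fun x ↦ f (-a + x) := by
  ext s hs
  rw [Measure.map_apply (measurable_const_add a) hs,
    withDensity_apply _ (measurable_const_add a hs), withDensity_apply _ hs]
  simpa using (measurePreserving_add_left μ a).setLIntegral_comp_preimage_emb
    (measurableEmbedding_addLeft a) (fun x ↦ f (-a + x)) s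

end MeasureTheory

noncomputable def laplacePDF (b y : ℝ) : ℝ := 1 / (2 * b) * exp (-|y| / b)

lemma laplaceMeasure_eq_withDensity (b : ℝ) :
    laplaceMeasure b = volume.withDensity fun y ↦ ENNReal.ofReal (laplacePDF b y) := rfl

lemma laplacePDF_nonneg {b : ℝ} (hb : 0 ≤ b) (y : ℝ) : 0 ≤ laplacePDF b y := by
  unfold laplacePDF; positivity

@[fun_prop]
lemma measurable_laplacePDF (b : ℝ) : Measurable (laplacePDF b) := by
  unfold laplacePDF; fun_prop

lemma laplacePDF_le_exp_mul {b : ℝ} (hb : 0 < b) (x y : ℝ) :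
    laplacePDF b x ≤ exp (|x - y| / b) * laplacePDF b y := by
  have htri : -|x| ≤ |x - y| + -|y| := by
    linarith [abs_sub_abs_le_abs_sub y x, abs_sub_comm x y]
  calc laplacePDF b x ≤ 1 / (2 * b) * exp ((|x - y| + -|y|) / b) := by
        unfold laplacePDF; gcongr
    _ = exp (|x - y| / b) * laplacePDF b y := by
        rw [laplacePDF, add_div, exp_add]; ring

section Product

variable {ι : Type*} [Fintype ι]

lemma prod_laplacePDF_le {b : ℝ} (hb : 0 < b) (x y : ι → ℝ) :
    ∏ i, laplacePDF b (x i) ≤ exp ((∑ i, |x i - y i|) / b) * ∏ i, laplacePDF b (y i) := by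
  calc ∏ i, laplacePDF b (x i) ≤ ∏ i, (exp (|x i - y i| / b) * laplacePDF b (y i)) :=
        Finset.prod_le_prod (fun i _ ↦ laplacePDF_nonneg hb.le _)
          fun i _ ↦ laplacePDF_le_exp_mul hb _ _
    _ = exp ((∑ i, |x i - y i|) / b) * ∏ i, laplacePDF b (y i) := by
        rw [Finset.prod_mul_distrib, Finset.sum_div, exp_sum]

lemma pi_laplaceMeasure (b : ℝ) :
    Measure.pi (fun _ : ι ↦ laplaceMeasure b) =
      volume.withDensity fun x ↦ ∏ i, ENNReal.ofReal (laplacePDF b (x i)) := by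
  simp_rw [laplaceMeasure_eq_withDensity]
  rw [Measure.pi_withDensity fun _ ↦ by fun_prop, volume_pi]

lemma map_add_pi_laplaceMeasure (b : ℝ) (c : ι → ℝ) :
    (Measure.pi fun _ : ι ↦ laplaceMeasure b).map (c + ·) =
      volume.withDensity fun x ↦ ∏ i, ENNReal.ofReal (laplacePDF b (x i - c i)) := by
  rw [pi_laplaceMeasure, map_add_left_withDensity]
  simp [neg_add_eq_sub]

lemma map_add_pi_laplaceMeasure_le {b : ℝ} (hb : 0 < b) (c c' : ι → ℝ) :
    (Measure.pi fun _ : ι ↦ laplaceMeasure b).map (c + ·) ≤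
      ENNReal.ofReal (exp ((∑ i, |c i - c' i|) / b)) •
        (Measure.pi fun _ : ι ↦ laplaceMeasure b).map (c' + ·) := by
  rw [map_add_pi_laplaceMeasure, map_add_pi_laplaceMeasure,
    ← withDensity_smul' _ _ ENNReal.ofReal_ne_top]
  refine withDensity_mono (ae_of_all _ fun x ↦ ?_)
  have hpdf (i : ι) (a : ι → ℝ) : 0 ≤ laplacePDF b (x i - a i) := laplacePDF_nonneg hb.le _
  simp only [Pi.smul_apply, smul_eq_mul]
  rw [← ENNReal.ofReal_prod_of_nonneg fun i _ ↦ hpdf i c,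
    ← ENNReal.ofReal_prod_of_nonneg fun i _ ↦ hpdf i c', ← ENNReal.ofReal_mul (exp_nonneg _)]
  refine ENNReal.ofReal_le_ofReal ?_
  simpa only [Pi.sub_apply, sub_sub_sub_cancel_left, abs_sub_comm (c' _)] using
    prod_laplacePDF_le hb (x - c) (x - c')

end Product

/-- The Laplace mechanism: adding i.i.d. `Laplace(Δf/ε)` noise to each coordinate of a
query `f` with ℓ₁-sensitivity `Δf` is `(ε, 0)`-differentially private. -/
theorem laplace_mechanism_dp {DB : Type*} (adj : DB → DB → Prop) {k : ℕ}
    (f : DB → (Fin k → ℝ)) (Δf ε : ℝ) (hΔf : 0 < Δf) (hε : 0 < ε)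
    (hsens : ∀ D D', adj D D' → ∑ i, |f D i - f D' i| ≤ Δf) :
    ∀ D D', adj D D' → ∀ S : Set (Fin k → ℝ), MeasurableSet S →
      ((Measure.pi fun _ : Fin k => laplaceMeasure (Δf / ε)).map (fun y => f D + y)) S ≤
        ENNReal.ofReal (Real.exp ε) *
          ((Measure.pi fun _ : Fin k => laplaceMeasure (Δf / ε)).map (fun y => f D' + y)) S := by
  intro D D' hadj S _
  have hb : 0 < Δf / ε := div_pos hΔf hε
  have hratio : (∑ i, |f D i - f D' i|) / (Δf / ε) ≤ ε := by
    rw [div_le_iff₀ hb, mul_div_cancel₀ Δf hε.ne']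
    exact hsens D D' hadj
  calc _ ≤ (ENNReal.ofReal (exp ((∑ i, |f D i - f D' i|) / (Δf / ε))) •
          (Measure.pi fun _ : Fin k => laplaceMeasure (Δf / ε)).map (fun y => f D' + y)) S :=
        Measure.le_iff'.1 (map_add_pi_laplaceMeasure_le hb (f D) (f D')) S
    _ ≤ _ := by
        rw [Measure.smul_apply, smul_eq_mul]
        gcongr
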